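/- arXiv:2411.06002 — 2 statements merged into one kernel-verified Lean document; each statement's English description precedes it below -/
import Mathlib

section
/- Let κ be a cardinal. The (3,κ,ω)-hat game (three logicians, hat colours in κ, each seeing the two other hats and submitting a finite list of guesses) is winning if and only if κ ≤ ℵ₁. -/
/-!
If `κ ≤ ℵ₁`, well-order the colours so that every initial segment `Iic m` is countable and fix
injections `e m : Iic m → ℕ`. A logician seeing the hats `x, y` puts `m = max x y` and guesses
every `z ≤ m` with `e m z ≤ max (e m x) (e m y)`. The two logicians not wearing the largest hat
`m` both see `m`, and the one whose hat has the smaller `e m`-index is guessed correctly.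

If `κ > ℵ₁`, fix a set `X` of size `ℵ₁`, a hat `a` outside every guess of the first logician on
seeing two hats from `X`, and a countably infinite `Y ⊆ X`. Choose `b ∈ X` outside the countably
many guesses of the second logician on seeing `a` and some `c ∈ Y`, and then `c ∈ Y` outside the
finite guess of the third logician on seeing `a, b`: on the hats `(a, b, c)` everybody is wrong.
-/

open Cardinal Set

universe u v

/-- `f` depends on only finitely many coordinates of its argument; this is exactly continuity
with respect to the product topology on `ι → C`, where `C` and `X` carry the discrete topology. -/
def FinDep {ι : Type v} {C : Type u} {X : Type*} (f : (ι → C) → X) : Prop :=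
  ∀ h : ι → C, ∃ F : Finset ι, ∀ h' : ι → C, (∀ i ∈ F, h' i = h i) → f h' = f h

/-- A strategy in the hat game with logicians `L`, colours `C` and `< γ` many guesses:
each logician `a : L` produces a set of fewer than `γ` colours as guesses, where the guess is a
continuous function of the hats of the other logicians (in particular it depends on only finitely
many of the other hats, and never on the logician's own hat). -/
structure HatStrategy (L : Type v) (C : Type u) (γ : Cardinal.{u}) where
  guess : L → (L → C) → Set C
  small : ∀ a h, #(guess a h) < γ
  continuous : ∀ a, FinDep (guess a)
  blind : ∀ a : L, ∀ h h' : L → C, (∀ b, b ≠ a → h b = h' b) → guess a h = guess a h'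

/-- A strategy is winning if against every colouring some logician guesses their own colour. -/
def HatStrategy.IsWinning {L : Type v} {C : Type u} {γ : Cardinal.{u}}
    (S : HatStrategy L C γ) : Prop :=
  ∀ h : L → C, ∃ a, h a ∈ S.guess a h

/-- The hat game with logicians `L`, colours `C` and `< γ` many guesses is winning for the
logicians. -/
def HatWinning (L : Type v) (C : Type u) (γ : Cardinal.{u}) : Prop :=
  ∃ S : HatStrategy L C γ, S.IsWinning

/-- The `(λ, κ, γ)`-hat game is winning: `λ`-many logicians, `κ`-many colours,
`< γ` many guesses. -/
def HatGameWinning (lam κ γ : Cardinal.{u}) : Prop :=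
  HatWinning lam.out κ.out γ

universe w

theorem finDep_of_finite {ι C X : Type*} [Finite ι] (f : (ι → C) → X) : FinDep f := by
  have := Fintype.ofFinite ι
  exact fun _ => ⟨Finset.univ, fun _ hh => congrArg f (funext fun i => hh i (Finset.mem_univ i))⟩

theorem Cardinal.mk_biUnion_le_of_forall_le {ι α : Type u} {s : Set ι} {A : ι → Set α}
    {c : Cardinal.{u}} (hc : ℵ₀ ≤ c) (hs : #s ≤ c) (hA : ∀ i ∈ s, #(A i) ≤ c) :
    #(⋃ i ∈ s, A i) ≤ c :=
  calc #(⋃ i ∈ s, A i) ≤ #s * ⨆ i : s, #(A i) := mk_biUnion_le A s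
    _ ≤ c * c := mul_le_mul' hs (ciSup_le' fun i => hA i.1 i.2)
    _ = c := mul_eq_self hc

section Transport

variable {L : Type v} {L' : Type w} {C : Type u} {γ : Cardinal.{u}}

theorem HatWinning.of_equiv (e : L ≃ L') (hwin : HatWinning L C γ) : HatWinning L' C γ := by
  obtain ⟨S, hS⟩ := hwin
  refine ⟨⟨fun a h => S.guess (e.symm a) (h ∘ e), fun _ _ => S.small _ _, fun a h => ?_,
    fun a h h' hh => S.blind _ _ _ fun b hb => hh (e b) ?_⟩, fun h => ?_⟩
  · obtain ⟨F, hF⟩ := S.continuous (e.symm a) (h ∘ e)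
    exact ⟨F.map e.toEmbedding, fun h' hh' =>
      hF (h' ∘ e) fun i hi => hh' (e i) (Finset.mem_map_of_mem _ hi)⟩
  · rintro rfl
    exact hb (e.symm_apply_apply b).symm
  · obtain ⟨a, ha⟩ := hS (h ∘ e)
    exact ⟨e a, by simpa using ha⟩

theorem hatWinning_congr (e : L ≃ L') : HatWinning L C γ ↔ HatWinning L' C γ :=
  ⟨.of_equiv e, .of_equiv e.symm⟩

end Transport

section FinSucc

variable {n : ℕ} {C : Type u} {γ : Cardinal.{u}}

theorem hatWinning_fin_succ_of_forall_exists (G : Fin (n + 1) → (Fin n → C) → Set C)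
    (hG : ∀ i v, #(G i v) < γ) (hwin : ∀ h : Fin (n + 1) → C, ∃ i, h i ∈ G i (h ∘ i.succAbove)) :
    HatWinning (Fin (n + 1)) C γ :=
  ⟨⟨fun i h => G i (h ∘ i.succAbove), fun _ _ => hG _ _, fun _ => finDep_of_finite _,
    fun i _ _ hh => congrArg (G i) (funext fun k => hh _ (Fin.succAbove_ne i k))⟩, hwin⟩

theorem HatWinning.exists_fin_succ [Nonempty C] (hwin : HatWinning (Fin (n + 1)) C γ) :
    ∃ G : Fin (n + 1) → (Fin n → C) → Set C,
      (∀ i v, #(G i v) < γ) ∧ ∀ h : Fin (n + 1) → C, ∃ i, h i ∈ G i (h ∘ i.succAbove) := by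
  obtain ⟨S, hS⟩ := hwin
  set x₀ := Classical.arbitrary C
  have hblind : ∀ i h, S.guess i h = S.guess i (i.insertNth x₀ (h ∘ i.succAbove)) :=
    fun i h => S.blind i _ _ fun j hj => by
      obtain ⟨k, rfl⟩ := Fin.exists_succAbove_eq hj
      simp
  refine ⟨fun i v => S.guess i (i.insertNth x₀ v), fun _ _ => S.small _ _, fun h => ?_⟩
  obtain ⟨i, hi⟩ := hS h
  exact ⟨i, (hblind i h).subset hi⟩

end FinSucc

section SegmentGuess

variable {C : Type*} [LinearOrder C] (e : C → C → ℕ)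

def segmentGuess (x y : C) : Set C :=
  {z | z ≤ x ⊔ y ∧ e (x ⊔ y) z ≤ e (x ⊔ y) x ⊔ e (x ⊔ y) y}

theorem segmentGuess_comm (x y : C) : segmentGuess e x y = segmentGuess e y x := by
  simp only [segmentGuess, sup_comm x y, sup_comm (e (y ⊔ x) x)]

theorem segmentGuess_finite (he : ∀ m, InjOn (e m) (Iic m)) (x y : C) :
    (segmentGuess e x y).Finite :=
  Finite.of_finite_image (f := e (x ⊔ y))
    ((finite_Iic _).subset (image_subset_iff.2 fun _ hz => hz.2))
    ((he _).mono fun _ hz => hz.1)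

theorem mem_segmentGuess_or_mem {m x y : C} (hx : x ≤ m) (hy : y ≤ m) :
    x ∈ segmentGuess e m y ∨ y ∈ segmentGuess e m x := by
  simp only [segmentGuess, sup_of_le_left hx, sup_of_le_left hy]
  rcases le_total (e m x) (e m y) with h | h
  · exact Or.inl ⟨hx, le_sup_of_le_right h⟩
  · exact Or.inr ⟨hy, le_sup_of_le_right h⟩

theorem mem_segmentGuess_of_three (a b c : C) :
    a ∈ segmentGuess e b c ∨ b ∈ segmentGuess e a c ∨ c ∈ segmentGuess e a b := by
  rcases le_total b a with hba | hab
  · rcases le_total c a with hca | hac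
    · exact .inr (mem_segmentGuess_or_mem e hba hca)
    · rw [segmentGuess_comm e b c, segmentGuess_comm e a c]
      exact (mem_segmentGuess_or_mem e hac (hba.trans hac)).imp_right .inl
  · rcases le_total c b with hcb | hbc
    · rw [segmentGuess_comm e a b]
      exact (mem_segmentGuess_or_mem e hab hcb).imp_right .inr
    · rw [segmentGuess_comm e b c, segmentGuess_comm e a c]
      exact (mem_segmentGuess_or_mem e (hab.trans hbc) hbc).imp_right .inl

end SegmentGuess

theorem exists_linearOrder_countable_Iic {C : Type u} (hC : #C ≤ ℵ₁) :
    ∃ _ : LinearOrder C, ∀ x : C, (Iic x).Countable := by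
  obtain ⟨_, _, hord⟩ := Cardinal.exists_ord_eq_type_lt C
  refine ⟨‹_›, fun x => ?_⟩
  rw [← Iio_insert]
  have hIio : #(Iio x) ≤ ℵ₀ := lt_aleph_one_iff.1 ((mk_Iio_lt x hord).trans_le hC)
  exact (le_aleph0_iff_set_countable.1 hIio).insert x

theorem hatWinning_fin_three_of_mk_le_aleph_one {C : Type u} (hC : #C ≤ ℵ₁) :
    HatWinning (Fin 3) C ℵ₀ := by
  obtain ⟨_, hIic⟩ := exists_linearOrder_countable_Iic hC
  choose e he using fun m : C => countable_iff_exists_injOn.1 (hIic m)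
  refine hatWinning_fin_succ_of_forall_exists (fun _ v => segmentGuess e (v 0) (v 1))
    (fun _ _ => (segmentGuess_finite e he _ _).lt_aleph0) fun h => ?_
  rcases mem_segmentGuess_of_three e (h 0) (h 1) (h 2) with h₀ | h₁ | h₂
  exacts [⟨0, h₀⟩, ⟨1, h₁⟩, ⟨2, h₂⟩]

theorem exists_notMem_of_aleph_one_lt {C : Type u} (hC : ℵ₁ < #C) (G₀ G₁ G₂ : C → C → Set C)
    (h₀ : ∀ x y, (G₀ x y).Countable) (h₁ : ∀ x y, (G₁ x y).Countable)
    (h₂ : ∀ x y, (G₂ x y).Finite) :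
    ∃ a b c, a ∉ G₀ b c ∧ b ∉ G₁ a c ∧ c ∉ G₂ a b := by
  obtain ⟨X, hX⟩ := le_mk_iff_exists_set.1 hC.le
  have hℵ₀ : ℵ₀ ≤ ℵ₁ := aleph0_le_aleph 1
  have hU : #(⋃ x ∈ X, ⋃ y ∈ X, G₀ x y) ≤ ℵ₁ :=
    mk_biUnion_le_of_forall_le hℵ₀ hX.le fun x _ => mk_biUnion_le_of_forall_le hℵ₀ hX.le
      fun y _ => (le_aleph0_iff_set_countable.2 (h₀ x y)).trans hℵ₀
  obtain ⟨a, ha⟩ := compl_nonempty_of_mk_lt_mk (hU.trans_lt hC)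
  obtain ⟨Y, hYX, hY⟩ := le_mk_iff_exists_subset.1 (hℵ₀.trans hX.ge)
  have hYcount : Y.Countable := le_aleph0_iff_set_countable.1 hY.le
  obtain ⟨b, hbX, hb⟩ : (X \ ⋃ c ∈ Y, G₁ a c).Nonempty := by
    refine sdiff_nonempty.2 fun hXsub => ?_
    have := le_aleph0_iff_set_countable.2 ((hYcount.biUnion fun c _ => h₁ a c).mono hXsub)
    exact (aleph0_lt_aleph_one.trans_eq hX.symm).not_ge this
  obtain ⟨c, hcY, hc⟩ : (Y \ G₂ a b).Nonempty :=
    ((infinite_coe_iff.1 (infinite_iff.2 hY.ge)).sdiff (h₂ a b)).nonempty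
  exact ⟨a, b, c, fun h => ha (mem_biUnion hbX (mem_biUnion (hYX hcY) h)),
    fun h => hb (mem_biUnion hcY h), hc⟩

theorem not_hatWinning_fin_three_of_aleph_one_lt {C : Type u} (hC : ℵ₁ < #C) :
    ¬ HatWinning (Fin 3) C ℵ₀ := by
  have : Nonempty C := mk_ne_zero_iff.1 (pos_of_gt hC).ne'
  intro hwin
  obtain ⟨G, hG, hcover⟩ := hwin.exists_fin_succ
  have hcount : ∀ i v, (G i v).Countable := fun i v => le_aleph0_iff_set_countable.1 (hG i v).le
  obtain ⟨a, b, c, ha, hb, hc⟩ := exists_notMem_of_aleph_one_lt hC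
    (fun x y => G 0 ![x, y]) (fun x y => G 1 ![x, y]) (fun x y => G 2 ![x, y])
    (fun _ _ => hcount _ _) (fun _ _ => hcount _ _) fun _ _ => lt_aleph0_iff_set_finite.1 (hG _ _)
  obtain ⟨i, hi⟩ := hcover ![a, b, c]
  have hcomp : ∀ i, ![a, b, c] ∘ Fin.succAbove i = ![![b, c], ![a, c], ![a, b]] i := by
    intro i; ext k; fin_cases i <;> fin_cases k <;> rfl
  rw [hcomp] at hi
  fin_cases i
  exacts [ha hi, hb hi, hc hi]

/-- The `(3,κ,ω)`-hat game is winning iff `κ ≤ ℵ₁`. -/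
theorem stmt6 (κ : Cardinal.{u}) :
    HatGameWinning 3 κ ℵ₀ ↔ κ ≤ Cardinal.aleph 1 := by
  obtain ⟨e⟩ : Nonempty ((3 : Cardinal.{u}).out ≃ Fin 3) := mk_eq_nat_iff.1 (by simp)
  rw [HatGameWinning, hatWinning_congr e]
  refine ⟨fun hwin => ?_, fun hκ => hatWinning_fin_three_of_mk_le_aleph_one (by rwa [mk_out])⟩
  by_contra! hκ
  exact not_hatWinning_fin_three_of_aleph_one_lt (by rwa [mk_out]) hwin
end

section
/- Let γ be an infinite cardinal and suppose there exists a cardinal κ such that the (ω,κ,γ)-hat game is losing; let κ₀ be the least such cardinal. Then κ₀ > γ, κ₀ is strongly losing (i.e., the (ω,κ₀,δ)-hat game is losing for every infinite cardinal δ < κ₀), and κ₀ is the least strongly losing cardinal greater than γ. -/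
open Cardinal Set

universe u v

/-- `κ` is strongly losing: the `(ω,κ,δ)`-hat game is losing for every infinite `δ < κ`. -/
def StronglyLosing (κ : Cardinal.{u}) : Prop :=
  ∀ δ : Cardinal.{u}, ℵ₀ ≤ δ → δ < κ → ¬ HatWinning ℕ κ.out δ

/-!
If `κ₀ ≤ γ`, index the colours by an initial segment of the initial ordinal of `γ`: logician `n`
guesses every colour `≤` the hat of logician `n + 1`, fewer than `γ` colours, and a colouring
defeating this would be an infinite descending sequence of ordinals.

For `ℵ₀ ≤ δ < κ₀`, winning strategies `S` for `(ω, κ₀, δ)` and `T` for `(ω, δ, γ)` compose into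
one for `(ω × ω, κ₀, γ)`. Arrange the hats in rows; code each row by the hat of its first
`S`-correct logician, an element of that logician's guess set of size `< δ`, hence injectively
an element of `δ`. Logician `(a, m)` plays `T` in column `m` against the codes of the other rows
and decodes `T`'s guesses inside `S`'s guess set for row `m`. Both steps depend on finitely many
hats because the first correct logician does.

Minimality is immediate: a strongly losing `μ` with `γ < μ < κ₀` would lose the game with `< γ`
guesses, against the minimality of `κ₀`.
-/

namespace FinDep

variable {ι : Type v} {C : Type u} {X Y : Type*}

theorem eval (i : ι) : FinDep (fun h : ι → C => h i) :=
  fun _ => ⟨{i}, fun _ hh' => hh' i (Finset.mem_singleton_self i)⟩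

theorem map {f : (ι → C) → X} (hf : FinDep f) (φ : X → Y) : FinDep (φ ∘ f) :=
  fun h => (hf h).imp fun _ hF h' hh' => congrArg φ (hF h' hh')

theorem comp_pi {κ D : Type*} {f : (κ → D) → X} (hf : FinDep f) {g : (ι → C) → κ → D}
    (hg : ∀ j, FinDep (fun h => g h j)) : FinDep (fun h => f (g h)) := by
  classical
  intro h
  obtain ⟨F, hF⟩ := hf (g h)
  choose G hG using fun j => hg j h
  exact ⟨F.biUnion G, fun h' hh' => hF (g h') fun j hj =>
    hG j h' fun i hi => hh' i (Finset.mem_biUnion.2 ⟨j, hj, hi⟩)⟩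

theorem bind {n : (ι → C) → Y} (hn : FinDep n) {g : Y → (ι → C) → X}
    (hg : ∀ y, FinDep (g y)) : FinDep (fun h => g (n h) h) := by
  classical
  intro h
  obtain ⟨F, hF⟩ := hn h
  obtain ⟨G, hG⟩ := hg (n h) h
  refine ⟨F ∪ G, fun h' hh' => ?_⟩
  dsimp only
  rw [hF h' fun i hi => hh' i (Finset.mem_union_left G hi),
    hG h' fun i hi => hh' i (Finset.mem_union_right F hi)]

open Classical in
theorem nat_find {p : ℕ → (ι → C) → Prop} (hp : ∀ k, FinDep (p k)) (hex : ∀ h, ∃ k, p k h) :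
    FinDep (fun h => Nat.find (hex h)) := by
  intro h
  choose F hF using fun k => hp k h
  refine ⟨(Finset.range (Nat.find (hex h) + 1)).biUnion F, fun h' hh' => ?_⟩
  have hagree : ∀ k ≤ Nat.find (hex h), p k h' = p k h := fun k hk =>
    hF k h' fun i hi => hh' i (Finset.mem_biUnion.2 ⟨k, Finset.mem_range.2 (by omega), hi⟩)
  rw [Nat.find_eq_iff, hagree _ le_rfl]
  exact ⟨Nat.find_spec (hex h), fun k hk => hagree k hk.le ▸ Nat.find_min (hex h) hk⟩

end FinDep

section Transport

variable {L L' : Type v} {C C' : Type u} {γ : Cardinal.{u}}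

theorem HatWinning.of_embedding_colours (e : C' ↪ C) (hW : HatWinning L C γ) :
    HatWinning L C' γ := by
  obtain ⟨S, hS⟩ := hW
  refine ⟨⟨fun a h => e ⁻¹' S.guess a (e ∘ h), fun a h => ?_, fun a => ?_, ?_⟩, fun h => ?_⟩
  · exact (mk_preimage_of_injective e _ e.injective).trans_lt (S.small a _)
  · exact ((S.continuous a).comp_pi fun j => (FinDep.eval j).map e).map (e ⁻¹' ·)
  · exact fun a h h' hhh' =>
      congrArg (e ⁻¹' ·) (S.blind a (e ∘ h) (e ∘ h') fun b hb => congrArg e (hhh' b hb))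
  · obtain ⟨a, ha⟩ := hS (e ∘ h)
    exact ⟨a, ha⟩

theorem HatWinning.of_equiv_logicians (e : L ≃ L') (hW : HatWinning L C γ) :
    HatWinning L' C γ := by
  obtain ⟨S, hS⟩ := hW
  refine ⟨⟨fun a h => S.guess (e.symm a) (h ∘ e), fun a h => S.small _ _,
    fun a => (S.continuous (e.symm a)).comp_pi fun j => FinDep.eval (e j), ?_⟩, fun h => ?_⟩
  · intro a h h' hhh'
    refine S.blind (e.symm a) _ _ fun b hb => hhh' (e b) fun hba => hb ?_
    rw [← hba, e.symm_apply_apply]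
  · obtain ⟨a, ha⟩ := hS (h ∘ e)
    exact ⟨e a, by simpa using ha⟩

end Transport

theorem hatWinning_of_wellFoundedLT {C : Type u} [LinearOrder C] [WellFoundedLT C]
    {γ : Cardinal.{u}} (hC : ∀ x : C, #(Iic x) < γ) : HatWinning ℕ C γ := by
  refine ⟨⟨fun n h => Iic (h (n + 1)), fun n h => hC _,
    fun n => (FinDep.eval (n + 1)).map Iic, fun n h h' hhh' => ?_⟩, fun h => ?_⟩
  · rw [hhh' (n + 1) (by omega)]
  · by_contra! hlose
    obtain ⟨_, ⟨n, rfl⟩, hmin⟩ := wellFounded_lt.has_min (range h) ⟨h 0, 0, rfl⟩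
    exact hmin (h (n + 1)) ⟨n + 1, rfl⟩ (lt_of_not_ge (hlose n))

theorem hatWinning_of_mk_le {C : Type u} {γ : Cardinal.{u}} (hγ : ℵ₀ ≤ γ) (hC : #C ≤ γ) :
    HatWinning ℕ C γ := by
  have hIic : ∀ x : γ.ord.ToType, #(Iic x) < γ := fun x => by
    have hIio : #(Iio x) < γ := by
      simpa using mk_Iio_lt x (by rw [mk_ord_toType, Ordinal.type_toType])
    rw [← Iio_insert]
    exact mk_insert_le.trans_lt (add_lt_of_lt hγ hIio (one_lt_aleph0.trans_le hγ))
  rw [← mk_ord_toType γ, le_def] at hC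
  exact (hatWinning_of_wellFoundedLT hIic).of_embedding_colours hC.some

theorem mk_inter_preimage_le_of_injOn {α β : Type u} {f : α → β} {s : Set α} (hf : InjOn f s)
    (t : Set β) : #(s ∩ f ⁻¹' t : Set α) ≤ #t :=
  calc #(s ∩ f ⁻¹' t : Set α) = #(f '' (s ∩ f ⁻¹' t)) :=
        (mk_image_eq_of_injOn f _ (hf.mono inter_subset_left)).symm
    _ ≤ #t := mk_le_mk_of_subset (image_inter_preimage f s t ▸ inter_subset_right)

section Composition

variable {C D : Type u} {δ γ : Cardinal.{u}}

noncomputable def setCode (D : Type u) [Nonempty D] (G : Set C) : C → D :=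
  Classical.epsilon fun f : C → D => InjOn f G

theorem injOn_setCode [Nonempty D] {G : Set C} (hG : #G ≤ #D) : InjOn (setCode D G) G := by
  obtain ⟨e⟩ := (le_def _ _).1 hG
  exact Classical.epsilon_spec (exists_injOn_iff_injective.2 ⟨e, e.injective⟩)

namespace HatStrategy

variable (S : HatStrategy ℕ C δ) (hS : S.IsWinning)

open Classical in
noncomputable def firstHit (c : ℕ → C) : ℕ :=
  Nat.find (hS c)

open Classical in
theorem firstHit_mem (c : ℕ → C) : c (S.firstHit hS c) ∈ S.guess (S.firstHit hS c) c :=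
  Nat.find_spec (hS c)

theorem finDep_firstHit : FinDep (S.firstHit hS) :=
  FinDep.nat_find (fun k => (S.continuous k).bind fun G => (FinDep.eval k).map (· ∈ G)) hS

noncomputable def rowCode (D : Type u) [Nonempty D] (c : ℕ → C) : D :=
  setCode D (S.guess (S.firstHit hS c) c) (c (S.firstHit hS c))

theorem finDep_rowCode [Nonempty D] : FinDep (S.rowCode hS D) :=
  (S.finDep_firstHit hS).bind fun k =>
    (S.continuous k).bind fun G => (FinDep.eval k).map (setCode D G)

end HatStrategy

theorem HatWinning.prod {L : Type v} [Nonempty D] (hδD : δ ≤ #D) (hSW : HatWinning ℕ C δ)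
    (hTW : HatWinning L D γ) : HatWinning (ℕ × L) C γ := by
  obtain ⟨S, hS⟩ := hSW
  obtain ⟨T, hT⟩ := hTW
  let row (h : ℕ × L → C) (m : L) : ℕ → C := fun j => h (j, m)
  let codes (h : ℕ × L → C) : L → D := fun m => S.rowCode hS D (row h m)
  have hcodes : ∀ m, FinDep fun h => codes h m := fun m =>
    (S.finDep_rowCode hS).comp_pi fun j => FinDep.eval (j, m)
  refine ⟨⟨fun p h => S.guess p.1 (row h p.2) ∩
      setCode D (S.guess p.1 (row h p.2)) ⁻¹' T.guess p.2 (codes h), fun p h => ?_,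
      fun p => ?_, fun p h h' hhh' => ?_⟩, fun h => ?_⟩
  · exact (mk_inter_preimage_le_of_injOn (injOn_setCode ((S.small _ _).le.trans hδD)) _).trans_lt
      (T.small _ _)
  · exact ((S.continuous p.1).comp_pi fun j => FinDep.eval (j, p.2)).bind fun G =>
      ((T.continuous p.2).comp_pi hcodes).map fun A => G ∩ setCode D G ⁻¹' A
  · have hrow : S.guess p.1 (row h p.2) = S.guess p.1 (row h' p.2) :=
      S.blind p.1 _ _ fun j hj => hhh' (j, p.2) fun hjp => hj (congrArg Prod.fst hjp)
    have hcode : T.guess p.2 (codes h) = T.guess p.2 (codes h') :=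
      T.blind p.2 _ _ fun m hm => congrArg (S.rowCode hS D) <|
        funext fun j => hhh' (j, m) fun hjm => hm (congrArg Prod.snd hjm)
    rw [hrow, hcode]
  · obtain ⟨m, hm⟩ := hT (codes h)
    exact ⟨(S.firstHit hS (row h m), m), S.firstHit_mem hS (row h m), hm⟩

end Composition

/-- If `γ` is infinite and `κ₀` is the least cardinal such that the `(ω,κ₀,γ)`-hat game is
losing, then `κ₀ > γ`, `κ₀` is strongly losing, and `κ₀` is the least strongly losing cardinal
above `γ`. -/
theorem stmt13 (γ κ₀ : Cardinal.{u}) (hγ : ℵ₀ ≤ γ)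
    (h₀ : ¬ HatWinning ℕ κ₀.out γ)
    (hmin : ∀ κ' : Cardinal.{u}, κ' < κ₀ → HatWinning ℕ κ'.out γ) :
    γ < κ₀ ∧ StronglyLosing κ₀ ∧
      ∀ μ : Cardinal.{u}, γ < μ → StronglyLosing μ → κ₀ ≤ μ := by
  have hγκ₀ : γ < κ₀ := by
    by_contra! hκ₀γ
    exact h₀ (hatWinning_of_mk_le hγ ((mk_out κ₀).trans_le hκ₀γ))
  refine ⟨hγκ₀, fun δ hδ hδκ₀ hwin => ?_, fun μ hγμ hμ => ?_⟩
  · have : Nonempty δ.out := mk_ne_zero_iff.1 <| (mk_out δ).trans_ne (aleph0_pos.trans_le hδ).ne'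
    exact h₀ ((hwin.prod (mk_out δ).ge (hmin δ hδκ₀)).of_equiv_logicians (Denumerable.eqv (ℕ × ℕ)))
  · by_contra! hμκ₀
    exact hμ γ hγ hγμ (hmin μ hμκ₀)
end
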